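/- Let δ > 0, M₂ > 0, set h = √(2δ/M₂) and ε(δ) = √(2M₂δ), and let x ∈ ℝ. Suppose f : ℝ → ℝ is twice differentiable on [x−h, x+h] with |f''(t)| ≤ M₂ there, and f_δ : ℝ → ℝ satisfies |f_δ(x+h) − f(x+h)| ≤ δ and |f_δ(x−h) − f(x−h)| ≤ δ. Define f_j = (f_δ(x+h) − f_δ(x−h))/(2h). If |f_j| > ε(δ), then f_j and f'(x) have the same sign, i.e. f_j · f'(x) > 0. -/

import Mathlib

/-!
Since `|f''| ≤ M₂`, the symmetric difference quotient of `f` with step `h` is within `M₂ h / 2` of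
`f'(x)`, and the noise moves it by at most `δ / h`. The step `h = √(2δ/M₂)` balances the two
errors, whose sum is then exactly `ε(δ)`. Hence `|f_j - f'(x)| ≤ ε(δ) < |f_j|`, which leaves
`f'(x)` no room to have the opposite sign to `f_j`.
-/

open Set

theorem norm_symmDiff_sub_deriv_le {E : Type*} [NormedAddCommGroup E] [NormedSpace ℝ E]
    {f f' f'' : ℝ → E} {x h M : ℝ} (hh : 0 ≤ h)
    (hf : ∀ t ∈ Icc (x - h) (x + h), HasDerivAt f (f' t) t)
    (hf' : ∀ t ∈ Icc (x - h) (x + h), HasDerivAt f' (f'' t) t)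
    (hf'' : ∀ t ∈ Icc (x - h) (x + h), ‖f'' t‖ ≤ M) :
    ‖f (x + h) - f (x - h) - (2 * h) • f' x‖ ≤ M * h ^ 2 := by
  have hx : x ∈ Icc (x - h) (x + h) := ⟨by linarith, by linarith⟩
  have lipschitz (t : ℝ) (ht : t ∈ Icc (x - h) (x + h)) : ‖f' t - f' x‖ ≤ M * |t - x| := by
    simpa [Real.norm_eq_abs] using Convex.norm_image_sub_le_of_norm_hasDerivWithin_le
      (fun s hs => (hf' s hs).hasDerivWithinAt) hf'' (convex_Icc _ _) hx ht
  have mem {t : ℝ} (ht : t ∈ Icc 0 h) :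
      x + t ∈ Icc (x - h) (x + h) ∧ x - t ∈ Icc (x - h) (x + h) := by
    obtain ⟨h0, h1⟩ := ht
    exact ⟨⟨by linarith, by linarith⟩, ⟨by linarith, by linarith⟩⟩
  -- `φ` vanishes at `0` and `‖φ'(t)‖ ≤ 2 M t`, so it is dominated by `M t ^ 2`.
  set φ : ℝ → E := fun t => f (x + t) - f (x - t) - (2 * t) • f' x
  have hφ (t : ℝ) (ht : t ∈ Icc 0 h) :
      HasDerivAt φ (f' (x + t) + f' (x - t) - (2 : ℝ) • f' x) t := by
    have h₁ := (hf _ (mem ht).1).scomp t ((hasDerivAt_id' t).const_add x)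
    have h₂ := (hf _ (mem ht).2).scomp t ((hasDerivAt_id' t).const_sub x)
    have h₃ := ((hasDerivAt_id t).const_mul (2 : ℝ)).smul_const (f' x)
    refine ((h₁.sub h₂).sub h₃).congr_deriv ?_
    simp [two_smul]
  have bound (t : ℝ) (ht : t ∈ Ico 0 h) :
      ‖f' (x + t) + f' (x - t) - (2 : ℝ) • f' x‖ ≤ 2 * M * t := by
    have ht' := Ico_subset_Icc_self ht
    calc ‖f' (x + t) + f' (x - t) - (2 : ℝ) • f' x‖
        = ‖(f' (x + t) - f' x) + (f' (x - t) - f' x)‖ := by rw [two_smul]; abel_nf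
      _ ≤ M * |x + t - x| + M * |x - t - x| :=
          (norm_add_le _ _).trans (add_le_add (lipschitz _ (mem ht').1) (lipschitz _ (mem ht').2))
      _ = 2 * M * t := by
          rw [add_sub_cancel_left, sub_sub_cancel_left, abs_neg, abs_of_nonneg ht.1]; ring
  have key := image_norm_le_of_norm_deriv_right_le_deriv_boundary (B := fun t => M * t ^ 2)
    (fun t ht => (hφ t ht).continuousAt.continuousWithinAt)
    (fun t ht => (hφ t (Ico_subset_Icc_self ht)).hasDerivWithinAt)
    (by simp [φ]) (fun t => ((hasDerivAt_pow 2 t).const_mul M).congr_deriv (by norm_num; ring))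
    bound (right_mem_Icc.2 hh)
  simpa [φ] using key

theorem abs_noisy_symmDiffQuot_sub_deriv_le {f f' f'' g : ℝ → ℝ} {x h M δ : ℝ} (hh : 0 < h)
    (hf : ∀ t ∈ Icc (x - h) (x + h), HasDerivAt f (f' t) t)
    (hf' : ∀ t ∈ Icc (x - h) (x + h), HasDerivAt f' (f'' t) t)
    (hf'' : ∀ t ∈ Icc (x - h) (x + h), |f'' t| ≤ M)
    (hg_add : |g (x + h) - f (x + h)| ≤ δ) (hg_sub : |g (x - h) - f (x - h)| ≤ δ) :
    |(g (x + h) - g (x - h)) / (2 * h) - f' x| ≤ δ / h + M * h / 2 := by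
  have htrunc : |f (x + h) - f (x - h) - 2 * h * f' x| ≤ M * h ^ 2 :=
    norm_symmDiff_sub_deriv_le hh.le hf hf' hf''
  have htotal : |g (x + h) - g (x - h) - 2 * h * f' x| ≤ 2 * δ + M * h ^ 2 := by
    have hsplit : g (x + h) - g (x - h) - 2 * h * f' x = (g (x + h) - f (x + h))
        - (g (x - h) - f (x - h)) + (f (x + h) - f (x - h) - 2 * h * f' x) := by ring
    rw [hsplit]
    linarith [abs_add_le (g (x + h) - f (x + h) - (g (x - h) - f (x - h)))
      (f (x + h) - f (x - h) - 2 * h * f' x),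
      abs_sub (g (x + h) - f (x + h)) (g (x - h) - f (x - h))]
  have hquot : (g (x + h) - g (x - h)) / (2 * h) - f' x
      = (g (x + h) - g (x - h) - 2 * h * f' x) / (2 * h) := by field_simp
  rw [hquot, abs_div, abs_of_pos (by positivity : 0 < 2 * h), div_le_iff₀ (by positivity)]
  calc _ ≤ 2 * δ + M * h ^ 2 := htotal
    _ = (δ / h + M * h / 2) * (2 * h) := by field_simp

theorem div_sqrt_add_mul_sqrt_div_two {δ M : ℝ} (hδ : 0 < δ) (hM : 0 < M) :
    δ / √(2 * δ / M) + M * √(2 * δ / M) / 2 = √(2 * M * δ) := by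
  set s := √(2 * δ / M)
  set t := √(2 * M * δ)
  have hs : 0 < s := Real.sqrt_pos.2 (by positivity)
  have hss : s ^ 2 = 2 * δ / M := Real.sq_sqrt (by positivity)
  have hst : s * t = 2 * δ := by
    rw [← Real.sqrt_mul (by positivity), show 2 * δ / M * (2 * M * δ) = (2 * δ) ^ 2 by
      field_simp]
    exact Real.sqrt_sq (by positivity)
  have hMs : M * s ^ 2 = 2 * δ := by rw [hss]; field_simp
  field_simp
  nlinarith

theorem mul_pos_of_abs_sub_le_of_lt_abs {a b ε : ℝ} (hab : |a - b| ≤ ε) (ha : ε < |a|) :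
    0 < a * b := by
  obtain ⟨hab₁, hab₂⟩ := abs_le.1 hab
  rcases lt_abs.1 ha with ha | ha
  · exact mul_pos (by linarith) (by linarith)
  · exact mul_pos_of_neg_of_neg (by linarith) (by linarith)

/-- sign determination.  With `h = √(2δ/M₂)`, `ε(δ) = √(2M₂δ)`,
and `f_j = (f_δ(x+h) - f_δ(x-h))/(2h)` computed from noisy data of a function
`f` twice differentiable on `[x-h, x+h]` with `|f''| ≤ M₂`: if `|f_j| > ε(δ)`
then `f_j` and `f'(x)` have the same sign. -/
theorem sign_determination
    (δ M₂ h ε x : ℝ) (hδ : 0 < δ) (hM₂ : 0 < M₂)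
    (hh : h = Real.sqrt (2 * δ / M₂)) (hε : ε = Real.sqrt (2 * M₂ * δ))
    (f f' f'' fδ : ℝ → ℝ)
    (hder1 : ∀ t ∈ Set.Icc (x - h) (x + h), HasDerivAt f (f' t) t)
    (hder2 : ∀ t ∈ Set.Icc (x - h) (x + h), HasDerivAt f' (f'' t) t)
    (hbound : ∀ t ∈ Set.Icc (x - h) (x + h), |f'' t| ≤ M₂)
    (hnoise1 : |fδ (x + h) - f (x + h)| ≤ δ)
    (hnoise2 : |fδ (x - h) - f (x - h)| ≤ δ)
    (hbig : ε < |(fδ (x + h) - fδ (x - h)) / (2 * h)|) :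
    (fδ (x + h) - fδ (x - h)) / (2 * h) * f' x > 0 := by
  have hh₀ : 0 < h := hh ▸ Real.sqrt_pos.2 (by positivity)
  have herr := abs_noisy_symmDiffQuot_sub_deriv_le hh₀ hder1 hder2 hbound hnoise1 hnoise2
  rw [hh, div_sqrt_add_mul_sqrt_div_two hδ hM₂, ← hε, ← hh] at herr
  exact mul_pos_of_abs_sub_le_of_lt_abs herr hbig
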